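/- For all real numbers x and u with 1 ≤ x ≤ u, log₂(1 + u) − log₂(1 + u − x) ≥ x/u. -/

import Mathlib

/-!
Writing `s = x / (1 + u - x)`, the left side is `log₂ (1 + s)`. By concavity of `log`,
`log₂ (1 + s) ≥ s` on `[0, 1]` (chord from `0` to `1`), and `log₂ (1 + s) ≥ 1` for `s ≥ 1`;
both `s` and `1` are at least `x / u` because `1 + u - x ≤ u` and `x ≤ u`.
-/

open Real

lemma le_logb_two_one_add {s : ℝ} (hs₀ : 0 ≤ s) (hs₁ : s ≤ 1) : s ≤ logb 2 (1 + s) := by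
  rw [logb, le_div_iff₀ (log_pos one_lt_two)]
  calc s * log 2 = (1 - s) * log 1 + s * log 2 := by rw [log_one, mul_zero, zero_add]
    _ ≤ log ((1 - s) * 1 + s * 2) :=
      strictConcaveOn_log_Ioi.concaveOn.2 (by norm_num) (by norm_num) (by linarith) hs₀ (by ring)
    _ = log (1 + s) := by ring_nf

lemma min_le_logb_two_one_add {s : ℝ} (hs : 0 ≤ s) : min s 1 ≤ logb 2 (1 + s) := by
  rcases le_total s 1 with hs₁ | hs₁
  · exact (min_le_left s 1).trans (le_logb_two_one_add hs hs₁)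
  · calc min s 1 ≤ 1 := min_le_right s 1
      _ = logb 2 2 := (logb_self_eq_one one_lt_two).symm
      _ ≤ logb 2 (1 + s) := logb_le_logb_of_le one_lt_two two_pos (by linarith)

/-- For all real numbers `x` and `u` with `1 ≤ x ≤ u`,
`log₂(1 + u) − log₂(1 + u − x) ≥ x/u`. -/
theorem log2_diff_ge (x u : ℝ) (hx : 1 ≤ x) (hxu : x ≤ u) :
    Real.logb 2 (1 + u) - Real.logb 2 (1 + u - x) ≥ x / u := by
  have hd : 0 < 1 + u - x := by linarith
  have hdiff : logb 2 (1 + u) - logb 2 (1 + u - x) = logb 2 (1 + x / (1 + u - x)) := by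
    rw [← logb_div (by linarith) hd.ne']
    congr 1
    field_simp
    ring
  rw [hdiff, ge_iff_le]
  calc x / u ≤ min (x / (1 + u - x)) 1 :=
        le_min (div_le_div_of_nonneg_left (by linarith) hd (by linarith))
          (div_le_one_of_le₀ hxu (by linarith))
    _ ≤ logb 2 (1 + x / (1 + u - x)) := min_le_logb_two_one_add (by positivity)
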